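/- (Equation (3.13)) Let μ be a nonzero purely imaginary complex number and suppose the complex matrix μ⁻¹D⁻¹ + Iinv is invertible. Then the complex number z(μ) := eᵀ(μ⁻¹D⁻¹ + Iinv)⁻¹e satisfies |z(μ) − 1| = 1, i.e. z(μ) lies on the circle of radius 1 centered at 1. -/

import Mathlib

open Matrix

/-- The sinc integrand `sin(πt)/(πt)`, extended by the value 1 at `t = 0`. -/
noncomputable def sincFn (t : ℝ) : ℝ :=
  if t = 0 then 1 else Real.sin (Real.pi * t) / (Real.pi * t)

/-- The `m × m` Toeplitz matrix `Iinv(k,l) = 1/2 + ∫₀^{k-l} sin(πt)/(πt) dt`. -/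
noncomputable def IinvMat (m : ℕ) : Matrix (Fin m) (Fin m) ℝ :=
  fun k l => 1 / 2 + ∫ t in (0 : ℝ)..((k : ℝ) - (l : ℝ)), sincFn t

/-- The skew-symmetric part `S = (Iinv - Iinvᵀ)/2`. -/
noncomputable def Smat (m : ℕ) : Matrix (Fin m) (Fin m) ℝ :=
  (2 : ℝ)⁻¹ • (IinvMat m - (IinvMat m)ᵀ)

/-- The all-ones vector `e ∈ ℝ^m`. -/
def eVec (m : ℕ) : Fin m → ℝ := fun _ => 1

/-- The all-ones vector in `ℂ^m`. -/
def eVecC (m : ℕ) : Fin m → ℂ := fun _ => 1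

/-!
Write `M = μ⁻¹ D⁻¹ + Iinv`. Since `sinc` is even, `∫₀^x sinc` is odd, so `Iinv + Iinvᵀ = e eᵀ`;
and `μ⁻¹ D⁻¹` is skew-Hermitian because `μ` is purely imaginary. Hence `M + Mᴴ = e eᵀ`.
Evaluating the quadratic form of `M + Mᴴ` at `v = M⁻¹ e` gives `z̄ + z` on one side and `z̄ z` on
the other, where `z = eᵀ v`; so `|z - 1|² = z̄ z - z̄ - z + 1 = 1`.
-/

theorem RCLike.norm_sub_one_eq_one_of_conj_mul_self {K : Type*} [RCLike K] {z : K}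
    (h : starRingEnd K z * z = starRingEnd K z + z) : ‖z - 1‖ = 1 := by
  have hsq : ((‖z - 1‖ ^ 2 : ℝ) : K) = 1 := by
    rw [RCLike.ofReal_pow, ← RCLike.conj_mul, map_sub, map_one]
    linear_combination h
  exact (pow_eq_one_iff_of_nonneg (norm_nonneg _) two_ne_zero).mp (by exact_mod_cast hsq)

theorem Matrix.norm_star_dotProduct_sub_one_of_add_conjTranspose {K n : Type*} [RCLike K]
    [Fintype n] {M : Matrix n n K} {u v : n → K} (hM : M + Mᴴ = vecMulVec u (star u))
    (hv : M *ᵥ v = u) : ‖star u ⬝ᵥ v - 1‖ = 1 := by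
  apply RCLike.norm_sub_one_eq_one_of_conj_mul_self
  have hvu : star v ⬝ᵥ u = starRingEnd K (star u ⬝ᵥ v) := star_dotProduct v u
  calc starRingEnd K (star u ⬝ᵥ v) * (star u ⬝ᵥ v)
      = star v ⬝ᵥ (M + Mᴴ) *ᵥ v := by
        rw [hM, vecMulVec_mulVec, dotProduct_smul, hvu]; rfl
    _ = starRingEnd K (star u ⬝ᵥ v) + star u ⬝ᵥ v := by
        rw [add_mulVec, dotProduct_add, hv, hvu, dotProduct_mulVec, ← star_mulVec, hv]

theorem Matrix.IsHermitian.smul_add_conjTranspose_smul_eq_zero {α n : Type*} [CommRing α]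
    [StarRing α] {A : Matrix n n α} (hA : A.IsHermitian) {c : α} (hc : star c = -c) :
    c • A + (c • A)ᴴ = 0 := by
  rw [conjTranspose_smul, hA.eq, hc, neg_smul, add_neg_cancel]

theorem intervalIntegral.integral_zero_neg_of_even {E : Type*} [NormedAddCommGroup E]
    [NormedSpace ℝ E] {f : ℝ → E} (hf : ∀ t, f (-t) = f t) (x : ℝ) :
    ∫ t in (0 : ℝ)..-x, f t = -∫ t in (0 : ℝ)..x, f t := by
  rw [← intervalIntegral.integral_symm, ← neg_zero, ← intervalIntegral.integral_comp_neg]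
  simp only [hf, neg_zero]

theorem sincFn_neg (t : ℝ) : sincFn (-t) = sincFn t := by
  unfold sincFn
  rcases eq_or_ne t 0 with rfl | ht
  · simp
  · rw [if_neg (neg_ne_zero.mpr ht), if_neg ht, mul_neg, Real.sin_neg, neg_div_neg_eq]

theorem IinvMat_add_transpose (m : ℕ) :
    IinvMat m + (IinvMat m)ᵀ = vecMulVec (eVec m) (eVec m) := by
  ext k l
  simp only [Matrix.add_apply, transpose_apply, vecMulVec_apply, eVec, mul_one, IinvMat]
  rw [← neg_sub, intervalIntegral.integral_zero_neg_of_even sincFn_neg]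
  ring

theorem stmt11_general (m : ℕ) (d : Fin m → ℝ)
    (μ : ℂ) (hμim : μ.re = 0) :
    let Dc : Matrix (Fin m) (Fin m) ℂ := (Matrix.diagonal d).map Complex.ofReal
    let Mc : Matrix (Fin m) (Fin m) ℂ := μ⁻¹ • Dc⁻¹ + (IinvMat m).map Complex.ofReal
    IsUnit Mc →
      ‖eVecC m ⬝ᵥ Mc⁻¹.mulVec (eVecC m) - 1‖ = 1 := by
  intro Dc Mc hMc
  have hDc : Dc⁻¹.IsHermitian :=
    ((isHermitian_diagonal d).map _ fun _ => by simp).inv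
  have hμ : star μ⁻¹ = -μ⁻¹ := by
    rw [star_inv₀, ← inv_neg]
    exact congrArg _ (Complex.ext (by simp [hμim]) (by simp))
  have hI : (IinvMat m).map Complex.ofReal + ((IinvMat m).map Complex.ofReal)ᴴ =
      vecMulVec (eVecC m) (star (eVecC m)) := by
    rw [← conjTranspose_map _ fun _ => by simp, conjTranspose_eq_transpose_of_trivial,
      ← Matrix.map_add _ Complex.ofReal_add, IinvMat_add_transpose]
    ext
    simp [vecMulVec_apply, eVec, eVecC]
  have hM : Mc + Mcᴴ = vecMulVec (eVecC m) (star (eVecC m)) := by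
    rw [conjTranspose_add, add_add_add_comm, hDc.smul_add_conjTranspose_smul_eq_zero hμ,
      zero_add, hI]
  have hv : Mc *ᵥ Mc⁻¹ *ᵥ eVecC m = eVecC m := by
    rw [mulVec_mulVec, mul_nonsing_inv _ ((isUnit_iff_isUnit_det Mc).mp hMc), one_mulVec]
  have he : star (eVecC m) = eVecC m := funext fun _ => star_one ℂ
  simpa [he] using norm_star_dotProduct_sub_one_of_add_conjTranspose hM hv

theorem stmt11 (m : ℕ) (d : Fin m → ℝ) (hd : ∀ j, 0 < d j)
    (μ : ℂ) (hμ0 : μ ≠ 0) (hμim : μ.re = 0) :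
    let Dc : Matrix (Fin m) (Fin m) ℂ := (Matrix.diagonal d).map Complex.ofReal
    let Mc : Matrix (Fin m) (Fin m) ℂ := μ⁻¹ • Dc⁻¹ + (IinvMat m).map Complex.ofReal
    IsUnit Mc →
      ‖eVecC m ⬝ᵥ Mc⁻¹.mulVec (eVecC m) - 1‖ = 1 :=
  stmt11_general m d μ hμim
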